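/- arXiv:2512.00865 — 5 statements merged into one kernel-verified Lean document; each statement's English description precedes it below -/
import Mathlib

section
/- Let (X, τ) be a topological space. Then the equality cl_τ(A) = ⋃_{x ∈ A} cl_τ({x}) holds for every nonempty subset A of X if and only if (X, τ) is an Alexandroff space. -/
open Topology

def IsAlexandroff {X : Type*} (τ : TopologicalSpace X) : Prop :=
  ∀ S : Set (Set X), (∀ s ∈ S, IsOpen[τ] s) → IsOpen[τ] (⋂₀ S)

def IsQuasiMetric {X : Type*} (d : X → X → ℝ) : Prop :=
  (∀ x y, 0 ≤ d x y) ∧ (∀ x, d x x = 0) ∧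
  (∀ x y z, d x y ≤ d x z + d z y) ∧
  (∀ x y, d x y = 0 → d y x = 0 → x = y)

def ballTopology {X : Type*} (d : X → X → ℝ) : TopologicalSpace X :=
  TopologicalSpace.generateFrom {B | ∃ x r, 0 < r ∧ B = {y | d x y < r}}

def IsEquidistantQM {X : Type*} (d : X → X → ℝ) : Prop :=
  ∃ t > 0, ∀ x y, d x y ≠ 0 → d x y = t

def IsEquidistantMetric {X : Type*} (ρ : X → X → ℝ) : Prop :=
  (∀ x y, ρ x y = 0 ↔ x = y) ∧ (∀ x y, ρ x y = ρ y x) ∧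
  (∀ x y z, ρ x z ≤ ρ x y + ρ y z) ∧
  ∃ t > 0, ∀ x y, x ≠ y → ρ x y = t

theorem closure_eq_biUnion_closure_singleton {X : Type*} [TopologicalSpace X]
    [AlexandrovDiscrete X] (A : Set X) : closure A = ⋃ x ∈ A, closure {x} := by
  conv_lhs => rw [← Set.biUnion_of_singleton A]
  simp only [closure_iUnion]

theorem alexandrovDiscrete_of_closure_eq_biUnion {X : Type*} [TopologicalSpace X]
    (h : ∀ A : Set X, A.Nonempty → closure A = ⋃ x ∈ A, closure {x}) :
    AlexandrovDiscrete X := by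
  refine alexandrovDiscrete_iff_isClosed.2 fun S hS => ?_
  rcases (⋃₀ S).eq_empty_or_nonempty with hempty | hne
  · exact hempty ▸ isClosed_empty
  refine closure_subset_iff_isClosed.1 ?_
  rw [h _ hne]
  intro y hy
  obtain ⟨x, ⟨s, hs, hxs⟩, hy⟩ := Set.mem_iUnion₂.1 hy
  exact ⟨s, hs, (hS s hs).closure_subset_iff.2 (Set.singleton_subset_iff.2 hxs) hy⟩

theorem alexandrovDiscrete_iff_closure_eq_biUnion {X : Type*} [TopologicalSpace X] :
    AlexandrovDiscrete X ↔ ∀ A : Set X, A.Nonempty → closure A = ⋃ x ∈ A, closure {x} :=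
  ⟨fun _ A _ => closure_eq_biUnion_closure_singleton A, alexandrovDiscrete_of_closure_eq_biUnion⟩

theorem isAlexandroff_iff_alexandrovDiscrete {X : Type*} (τ : TopologicalSpace X) :
    IsAlexandroff τ ↔ @AlexandrovDiscrete X τ :=
  (@alexandrovDiscrete_iff X τ).symm

theorem stmt1 {X : Type*} (τ : TopologicalSpace X) :
    (∀ A : Set X, A.Nonempty → @closure X τ A = ⋃ x ∈ A, @closure X τ {x}) ↔
      IsAlexandroff τ := by
  let := τ
  rw [isAlexandroff_iff_alexandrovDiscrete, alexandrovDiscrete_iff_closure_eq_biUnion]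
end

section
/- Let X be a nonempty set, let (X, τ^A) be an Alexandroff topological space and let τ be a T₀ topology on X. If cl_τ({x}) = cl_{τ^A}({x}) for every x ∈ X, then τ ⊆ τ^A, i.e., τ^A is finer than τ. -/
open Topology

theorem IsAlexandroff.alexandrovDiscrete {X : Type*} {τ : TopologicalSpace X}
    (hτ : IsAlexandroff τ) : @AlexandrovDiscrete X τ :=
  @AlexandrovDiscrete.mk X τ hτ

theorem AlexandrovDiscrete.le_of_specializes_imp {X : Type*} {t₁ t₂ : TopologicalSpace X}
    [@AlexandrovDiscrete X t₁]
    (h : ∀ x y : X, @Specializes X t₁ x y → @Specializes X t₂ x y) : t₁ ≤ t₂ := by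
  intro s hs
  rw [@isOpen_iff_forall_specializes X t₁]
  exact fun x y hxy hy => (@Specializes.mem_open X t₂ x y s (h x y hxy) hs hy)

theorem stmt12_general {X : Type*} (τA τ : TopologicalSpace X)
    (hA : IsAlexandroff τA)
    (h : ∀ x : X, @closure X τ {x} = @closure X τA {x}) :
    ∀ s : Set X, IsOpen[τ] s → IsOpen[τA] s := by
  have := hA.alexandrovDiscrete
  refine AlexandrovDiscrete.le_of_specializes_imp fun x y hxy => ?_
  rw [@specializes_iff_mem_closure X τ, h]
  exact (@specializes_iff_mem_closure X τA x y).mp hxy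

theorem stmt12 {X : Type*} [Nonempty X] (τA τ : TopologicalSpace X)
    (hA : IsAlexandroff τA) (hT0 : @T0Space X τ)
    (h : ∀ x : X, @closure X τ {x} = @closure X τA {x}) :
    ∀ s : Set X, IsOpen[τ] s → IsOpen[τA] s :=
  stmt12_general τA τ hA h
end

section
/- If a topological space (X, τ) is quasi-metrizable by an equidistant quasi-metric d (i.e., τ equals the open-ball topology O^d and d takes only the values 0 and some fixed t > 0), then (X, τ) is a T₀-Alexandroff space. -/
open Topology

/-!
The relation `d x y = 0` is a preorder by the triangle inequality, and every ball is an upper set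
for it. When `d` is equidistant with value `t`, the ball of radius `t` about `x` is exactly the
principal upper set `{y | d x y = 0}`, so the open sets are precisely the upper sets. Upper sets
are closed under arbitrary intersections, and the separation axiom of a quasi-metric is
antisymmetry of the preorder, which is the T₀ property.
-/

namespace ballTopology

variable {X : Type*} {d : X → X → ℝ}

theorem mem_of_isOpen (htri : ∀ x y z, d x y ≤ d x z + d z y) {U : Set X}
    (hU : IsOpen[ballTopology d] U) {x y : X} (hx : x ∈ U) (hxy : d x y = 0) : y ∈ U := by
  induction hU generalizing x with
  | basic s hs =>
    obtain ⟨c, r, -, rfl⟩ := hs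
    calc d c y ≤ d c x + d x y := htri c y x
      _ = d c x := by rw [hxy, add_zero]
      _ < r := hx
  | univ => trivial
  | inter s u _ _ ihs ihu => exact ⟨ihs hx.1 hxy, ihu hx.2 hxy⟩
  | sUnion S _ ih =>
    obtain ⟨s, hs, hxs⟩ := hx
    exact ⟨s, hs, ih s hs hxs hxy⟩

theorem setOf_lt_eq_setOf_eq_zero {t : ℝ} (ht : 0 < t)
    (heq : ∀ x y, d x y ≠ 0 → d x y = t) (x : X) : {y | d x y < t} = {y | d x y = 0} := by
  ext y
  exact ⟨fun hy => Classical.byContradiction fun h => (heq x y h).not_lt hy,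
    fun hy => (hy.trans_lt ht : d x y < t)⟩

theorem isOpen_setOf_eq_zero (he : IsEquidistantQM d) (x : X) :
    IsOpen[ballTopology d] {y | d x y = 0} := by
  obtain ⟨t, ht, heq⟩ := he
  rw [← setOf_lt_eq_setOf_eq_zero ht heq]
  exact TopologicalSpace.GenerateOpen.basic _ ⟨x, t, ht, rfl⟩

theorem isOpen_iff (hd : IsQuasiMetric d) (he : IsEquidistantQM d) {U : Set X} :
    IsOpen[ballTopology d] U ↔ ∀ x ∈ U, ∀ y, d x y = 0 → y ∈ U := by
  obtain ⟨-, hzero, htri, -⟩ := hd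
  refine ⟨fun hU x hx y => mem_of_isOpen htri hU hx, fun hU => ?_⟩
  have hU_eq : U = ⋃ x ∈ U, {y | d x y = 0} := by
    ext y
    simp only [Set.mem_iUnion]
    exact ⟨fun hy => ⟨y, hy, hzero y⟩, fun ⟨x, hx, hxy⟩ => hU x hx y hxy⟩
  let := ballTopology d
  rw [hU_eq]
  exact isOpen_biUnion fun x _ => isOpen_setOf_eq_zero he x

theorem t0Space (hd : IsQuasiMetric d) (he : IsEquidistantQM d) : @T0Space X (ballTopology d) := by
  obtain ⟨-, hzero, -, hsep⟩ := hd
  let := ballTopology d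
  refine (t0Space_iff_inseparable X).2 fun x y hxy => hsep x y ?_ ?_
  · exact (hxy.mem_open_iff (isOpen_setOf_eq_zero he x)).1 (hzero x)
  · exact (hxy.mem_open_iff (isOpen_setOf_eq_zero he y)).2 (hzero y)

theorem isAlexandroff (hd : IsQuasiMetric d) (he : IsEquidistantQM d) :
    IsAlexandroff (ballTopology d) := by
  intro S hS
  rw [isOpen_iff hd he]
  intro x hx y hxy s hs
  exact (isOpen_iff hd he).1 (hS s hs) x (hx s hs) y hxy

end ballTopology

theorem stmt13 {X : Type*} (τ : TopologicalSpace X) (d : X → X → ℝ)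
    (hd : IsQuasiMetric d) (he : IsEquidistantQM d) (hτ : τ = ballTopology d) :
    @T0Space X τ ∧ IsAlexandroff τ := by
  subst hτ
  exact ⟨ballTopology.t0Space hd he, ballTopology.isAlexandroff hd he⟩
end

section
/- Let (X, τ) be a T₀-Alexandroff space. Define d(x, y) = 0 if x ∈ cl_τ({y}) and d(x, y) = 1 otherwise. Then d is an equidistant quasi-metric on X and the open-ball topology O^d equals τ. -/
open Topology

/-! The distance is `0` exactly along the specialization preorder (`y ⤳ x` iff `x ∈ closure {y}`).
Reflexivity and transitivity of `⤳` give the quasi-metric axioms, and T₀ makes `⤳` antisymmetric.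
A ball of radius `r ≤ 1` about `x` is `nhdsKer {x}`, the intersection of all open neighbourhoods
of `x`: it is open in an Alexandroff space, and every open set is the union of these minimal
neighbourhoods of its points, so the balls generate `τ`. -/

section SpecializationDist

variable {X : Type*} [TopologicalSpace X]

open Classical in
noncomputable def specializationDist (x y : X) : ℝ := if y ⤳ x then 0 else 1

theorem specializationDist_eq_zero_iff {x y : X} : specializationDist x y = 0 ↔ y ⤳ x := by
  unfold specializationDist
  split_ifs with h <;> simp [h]

theorem specializationDist_eq_one_of_ne_zero {x y : X} (h : specializationDist x y ≠ 0) :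
    specializationDist x y = 1 := by
  unfold specializationDist at *
  split_ifs at * <;> simp_all

theorem specializationDist_nonneg (x y : X) : 0 ≤ specializationDist x y := by
  unfold specializationDist
  split_ifs <;> norm_num

theorem specializationDist_le_one (x y : X) : specializationDist x y ≤ 1 := by
  unfold specializationDist
  split_ifs <;> norm_num

theorem specializationDist_triangle (x y z : X) :
    specializationDist x y ≤ specializationDist x z + specializationDist z y := by
  unfold specializationDist
  split_ifs <;> first | exact absurd (‹y ⤳ z›.trans ‹z ⤳ x›) ‹¬y ⤳ x› | norm_num

theorem isQuasiMetric_specializationDist [T0Space X] :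
    IsQuasiMetric (specializationDist (X := X)) := by
  refine ⟨specializationDist_nonneg, fun x ↦ specializationDist_eq_zero_iff.2 (specializes_refl x),
    specializationDist_triangle, fun x y hxy hyx ↦ ?_⟩
  exact (specializationDist_eq_zero_iff.1 hyx).antisymm (specializationDist_eq_zero_iff.1 hxy) |>.eq

theorem isEquidistantQM_specializationDist : IsEquidistantQM (specializationDist (X := X)) :=
  ⟨1, one_pos, fun _ _ ↦ specializationDist_eq_one_of_ne_zero⟩

theorem setOf_specializationDist_lt_of_le_one {r : ℝ} (hr₀ : 0 < r) (hr₁ : r ≤ 1) (x : X) :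
    {y | specializationDist x y < r} = nhdsKer {x} := by
  ext y
  rw [Set.mem_ofPred_eq, mem_nhdsKer_singleton, ← specializationDist_eq_zero_iff]
  constructor
  · intro h
    by_contra hne
    rw [specializationDist_eq_one_of_ne_zero hne] at h
    linarith
  · intro h
    rwa [h]

theorem setOf_specializationDist_lt_of_one_lt {r : ℝ} (hr : 1 < r) (x : X) :
    {y | specializationDist x y < r} = Set.univ :=
  Set.eq_univ_of_forall fun y ↦ (specializationDist_le_one x y).trans_lt hr

theorem ballTopology_specializationDist [AlexandrovDiscrete X] :
    ballTopology (specializationDist (X := X)) = ‹TopologicalSpace X› := by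
  apply le_antisymm
  · intro U hU
    have hU_eq : U = ⋃ x ∈ U, nhdsKer {x} := by
      rw [← nhdsKer_biUnion, Set.biUnion_of_singleton, hU.nhdsKer_eq]
    rw [hU_eq]
    refine @isOpen_biUnion X X (ballTopology _) _ _ fun x _ ↦ ?_
    rw [← setOf_specializationDist_lt_of_le_one one_pos le_rfl x]
    exact TopologicalSpace.isOpen_generateFrom_of_mem ⟨x, 1, one_pos, rfl⟩
  · refine le_generateFrom ?_
    rintro _ ⟨x, r, hr, rfl⟩
    rcases le_or_gt r 1 with hr₁ | hr₁
    · rw [setOf_specializationDist_lt_of_le_one hr hr₁]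
      exact isOpen_nhdsKer
    · rw [setOf_specializationDist_lt_of_one_lt hr₁]
      exact isOpen_univ

theorem eq_specializationDist {d : X → X → ℝ}
    (hd : ∀ x y : X, (x ∈ closure {y} → d x y = 0) ∧ (x ∉ closure {y} → d x y = 1)) :
    d = specializationDist := by
  ext x y
  by_cases h : y ⤳ x
  · rw [(hd x y).1 (specializes_iff_mem_closure.1 h), specializationDist_eq_zero_iff.2 h]
  · rw [(hd x y).2 (mt specializes_iff_mem_closure.2 h), specializationDist, if_neg h]

end SpecializationDist

theorem stmt14 {X : Type*} (τ : TopologicalSpace X)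
    (hA : IsAlexandroff τ) (hT0 : @T0Space X τ) (d : X → X → ℝ)
    (hd : ∀ x y : X, (x ∈ @closure X τ {y} → d x y = 0) ∧
      (x ∉ @closure X τ {y} → d x y = 1)) :
    IsQuasiMetric d ∧ IsEquidistantQM d ∧ ballTopology d = τ := by
  let := τ
  have : AlexandrovDiscrete X := ⟨hA⟩
  obtain rfl := eq_specializationDist hd
  exact ⟨isQuasiMetric_specializationDist, isEquidistantQM_specializationDist,
    ballTopology_specializationDist⟩
end

section
/- A topological space (X, τ) is quasi-metrizable by an equidistant quasi-metric if and only if (X, τ) is a T₀-Alexandroff space. -/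
open Topology

theorem stmt15 {X : Type*} (τ : TopologicalSpace X) :
    (∃ d : X → X → ℝ, IsQuasiMetric d ∧ IsEquidistantQM d ∧ τ = ballTopology d) ↔
      (@T0Space X τ ∧ IsAlexandroff τ) := by
  constructor
  · rintro ⟨d, ⟨hnn, hzero, htri, hsep⟩, ⟨t, ht, hteq⟩, rfl⟩
    have hball_eq : ∀ x y, d x y < t ↔ d x y = 0 := by
      intro x y
      constructor
      · intro h
        by_contra h0
        rw [hteq x y h0] at h
        exact lt_irrefl t h
      · intro h; rw [h]; exact ht
    have key : ∀ S : Set X, IsOpen[ballTopology d] S ↔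
        ∀ x ∈ S, ∀ y, d x y = 0 → y ∈ S := by
      intro S
      constructor
      · intro h
        have h' : TopologicalSpace.GenerateOpen
            {B | ∃ x r, 0 < r ∧ B = {y | d x y < r}} S := h
        induction h' with
        | basic B hB =>
          obtain ⟨x0, r, hr, rfl⟩ := hB
          intro x hx y hy
          have : d x0 y ≤ d x0 x + d x y := htri x0 y x
          rw [hy, add_zero] at this
          exact lt_of_le_of_lt this hx
        | univ => intro x _ y _; trivial
        | inter U V hU hV ihU ihV =>
          rintro x ⟨hxU, hxV⟩ y hy
          exact ⟨ihU hU x hxU y hy, ihV hV x hxV y hy⟩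
        | sUnion 𝒮 h𝒮 ih =>
          rintro x ⟨U, hU, hxU⟩ y hy
          exact ⟨U, hU, ih U hU (h𝒮 U hU) x hxU y hy⟩
      · intro hP
        have hopen : TopologicalSpace.GenerateOpen
            {B | ∃ x r, 0 < r ∧ B = {y | d x y < r}}
            (⋃₀ {B | ∃ x ∈ S, B = {y | d x y < t}}) := by
          refine TopologicalSpace.GenerateOpen.sUnion _ ?_
          rintro B ⟨x, hx, rfl⟩
          exact TopologicalSpace.GenerateOpen.basic _ ⟨x, t, ht, rfl⟩
        have heq : ⋃₀ {B | ∃ x ∈ S, B = {y | d x y < t}} = S := by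
          ext y
          constructor
          · rintro ⟨B, ⟨x, hx, rfl⟩, hyB⟩
            exact hP x hx y ((hball_eq x y).mp hyB)
          · intro hy
            exact ⟨_, ⟨y, hy, rfl⟩, by simpa [hzero y] using ht⟩
        exact heq ▸ hopen
    constructor
    · rw [@t0Space_iff_inseparable X (ballTopology d)]
      intro x y hxy
      rw [@inseparable_iff_forall_isOpen X (ballTopology d)] at hxy
      have hx : d x y = 0 := by
        have hop : IsOpen[ballTopology d] {z | d x z < t} :=
          TopologicalSpace.GenerateOpen.basic _ ⟨x, t, ht, rfl⟩
        have := (hxy _ hop).mp (by simpa [hzero x] using ht)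
        exact (hball_eq x y).mp this
      have hy : d y x = 0 := by
        have hop : IsOpen[ballTopology d] {z | d y z < t} :=
          TopologicalSpace.GenerateOpen.basic _ ⟨y, t, ht, rfl⟩
        have := (hxy _ hop).mpr (by simpa [hzero y] using ht)
        exact (hball_eq y x).mp this
      exact hsep x y hx hy
    · intro S hS
      rw [key]
      intro x hx y hy s hs
      exact (key s).mp (hS s hs) x (hx s hs) y hy
  · rintro ⟨hT0, hAlex⟩
    classical
    set M : X → Set X := fun x => ⋂₀ {S | IsOpen[τ] S ∧ x ∈ S} with hM
    have hMopen : ∀ x, IsOpen[τ] (M x) := fun x => hAlex _ (fun s hs => hs.1)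
    have hMself : ∀ x, x ∈ M x := fun x s hs => hs.2
    have hMsub : ∀ x S, IsOpen[τ] S → x ∈ S → M x ⊆ S :=
      fun x S hS hx => Set.sInter_subset_of_mem ⟨hS, hx⟩
    have hMtrans : ∀ x z, z ∈ M x → M z ⊆ M x :=
      fun x z hz => hMsub z (M x) (hMopen x) hz
    set d : X → X → ℝ := fun x y => if y ∈ M x then 0 else 1 with hd
    have hd01 : ∀ x y, d x y = 0 ↔ y ∈ M x := by
      intro x y
      by_cases h : y ∈ M x <;> simp [hd, h]
    refine ⟨d, ⟨?_, ?_, ?_, ?_⟩, ⟨1, one_pos, ?_⟩, ?_⟩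
    · intro x y; by_cases h : y ∈ M x <;> simp [hd, h]
    · intro x; simp [hd, hMself x]
    · intro x y z
      by_cases hxy : y ∈ M x
      · have h1 : d x y = 0 := (hd01 x y).mpr hxy
        rw [h1]
        have : (0:ℝ) ≤ d x z := by by_cases h : z ∈ M x <;> simp [hd, h]
        have h2 : (0:ℝ) ≤ d z y := by by_cases h : y ∈ M z <;> simp [hd, h]
        linarith
      · by_cases hxz : z ∈ M x
        · have hzy : y ∉ M z := fun h => hxy (hMtrans x z hxz h)
          simp [hd, hxy, hxz, hzy]
        · have : d x z = 1 := by simp [hd, hxz]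
          have h2 : (0:ℝ) ≤ d z y := by by_cases h : y ∈ M z <;> simp [hd, h]
          have h3 : d x y ≤ 1 := by by_cases h : y ∈ M x <;> simp [hd, h]
          linarith
    · intro x y hxy hyx
      have hy : y ∈ M x := (hd01 x y).mp hxy
      have hx : x ∈ M y := (hd01 y x).mp hyx
      have := (@t0Space_iff_inseparable X τ).mp hT0
      apply this
      rw [@inseparable_iff_forall_isOpen X τ]
      intro s hs
      constructor
      · intro h; exact hMsub x s hs h hy
      · intro h; exact hMsub y s hs h hx
    · intro x y h
      by_cases hc : y ∈ M x
      · exact absurd ((hd01 x y).mpr hc) h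
      · simp [hd, hc]
    · have hballM : ∀ x r, 0 < r → r ≤ 1 → {y | d x y < r} = M x := by
        intro x r hr hr1
        ext y
        by_cases h : y ∈ M x <;> simp [hd, h]
        · exact hr
        · linarith
      apply le_antisymm
      · apply le_generateFrom
        rintro B ⟨x, r, hr, rfl⟩
        by_cases hr1 : r ≤ 1
        · rw [hballM x r hr hr1]; exact hMopen x
        · have : {y | d x y < r} = Set.univ := by
            ext y
            simp only [Set.mem_setOf_eq, Set.mem_univ, iff_true]
            have : d x y ≤ 1 := by by_cases h : y ∈ M x <;> simp [hd, h]
            linarith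
          rw [this]; exact isOpen_univ
      · intro U hU
        change IsOpen[τ] U at hU
        have hopen : TopologicalSpace.GenerateOpen
            {B | ∃ x r, 0 < r ∧ B = {y | d x y < r}}
            (⋃₀ {B | ∃ x ∈ U, B = {y | d x y < 1}}) := by
          refine TopologicalSpace.GenerateOpen.sUnion _ ?_
          rintro B ⟨x, hx, rfl⟩
          exact TopologicalSpace.GenerateOpen.basic _ ⟨x, 1, one_pos, rfl⟩
        have heq : ⋃₀ {B | ∃ x ∈ U, B = {y | d x y < 1}} = U := by
          ext y
          constructor
          · rintro ⟨B, ⟨x, hx, rfl⟩, hyB⟩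
            rw [hballM x 1 one_pos le_rfl] at hyB
            exact hMsub x U hU hx hyB
          · intro hy
            refine ⟨_, ⟨y, hy, rfl⟩, ?_⟩
            rw [hballM y 1 one_pos le_rfl]
            exact hMself y
        exact heq ▸ hopen
end
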